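/- arXiv:2212.01811 — 3 statements merged into one kernel-verified Lean document; each statement's English description precedes it below -/
import Mathlib

section
/- Let X be a real random variable, p ∈ (0,1), I a Bernoulli random variable with P(I=1) = 1-p, and N an integer-valued random variable with P(N = n) = p(1-p)^n for n ≥ 0 (so N+1 is geometric with success probability p). Let (S_k) be a random walk with i.i.d. increments distributed as X, independent of N. Define W := max_{0 ≤ k ≤ N} S_k. Then W satisfies the distributional fixed-point equation W ∼ I·(W + X)^+, where on the right-hand side I, X, W are independent. -/
/-!
Conditionally on `N = n`, the maximum `M_n` of the first `n` steps of the walk satisfies Lindley's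
recursion `M_{n+1} = (M'_n + X_1)⁺`, where `M'_n` is the maximum of the walk restarted after its
first step; by the i.i.d. property `M'_n` has the law of `M_n` and is independent of `X_1`.
Mixing over the geometric law of `N`, with `P(N = 0) = p` and `P(N = n + 1) = (1 - p) P(N = n)`,
gives `law W = p δ₀ + (1 - p) law (W + X)⁺`, which is the law of `I (W + X)⁺`.
-/

open MeasureTheory ProbabilityTheory

def partialSum (x : ℕ → ℝ) (k : ℕ) : ℝ := ∑ i ∈ Finset.range k, x i

def runningMax (n : ℕ) (x : ℕ → ℝ) : ℝ :=
  (Finset.range (n + 1)).sup' Finset.nonempty_range_add_one (partialSum x)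

lemma partialSum_succ' (x : ℕ → ℝ) (k : ℕ) :
    partialSum x (k + 1) = partialSum (fun i => x (i + 1)) k + x 0 :=
  Finset.sum_range_succ' x k

lemma eq_partialSum {S x : ℕ → ℝ} (h0 : S 0 = 0) (hS : ∀ k, S (k + 1) = S k + x k) :
    S = partialSum x := by
  funext k
  induction k with
  | zero => simp [h0, partialSum]
  | succ k ih => rw [hS, ih, partialSum, partialSum, Finset.sum_range_succ]

lemma runningMax_zero (x : ℕ → ℝ) : runningMax 0 x = 0 := by
  simp [runningMax, partialSum]

lemma runningMax_succ (n : ℕ) (x : ℕ → ℝ) :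
    runningMax (n + 1) x = max (runningMax n (fun i => x (i + 1)) + x 0) 0 := by
  rw [runningMax, Finset.sup'_congr _ (Finset.range_add_one' (n + 1)) fun _ _ => rfl,
    Finset.sup'_insert (H := by simp), Finset.sup'_map, runningMax, Finset.sup'_add, max_comm]
  exact congrArg (max · 0) (Finset.sup'_congr _ rfl fun k _ => partialSum_succ' x k)

@[fun_prop]
lemma measurable_runningMax (n : ℕ) : Measurable (runningMax n) := by
  unfold runningMax partialSum
  fun_prop

lemma ProbabilityTheory.iIndepFun.indepFun_tail_head {Ω β : Type*} [MeasurableSpace Ω]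
    {mβ : MeasurableSpace β} {P : Measure Ω} {f : ℕ → Ω → β} (hf : ∀ i, Measurable (f i))
    (h : iIndepFun f P) :
    IndepFun (fun ω i => f (i + 1) ω) (f 0) P := by
  have hsup := indep_iSup_of_disjoint (fun i => (hf i).comap_le) h.iIndep
    (S := Set.Ioi 0) (T := {0}) (by simp)
  refine indep_of_indep_of_le_right (indep_of_indep_of_le_left hsup ?_) ?_
  · have htail : Measurable[⨆ i ∈ Set.Ioi 0, mβ.comap (f i)] fun ω i => f (i + 1) ω :=
      (@measurable_pi_iff Ω ℕ (fun _ => β) (⨆ i ∈ Set.Ioi 0, mβ.comap (f i)) _ _).2 fun i =>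
        (comap_measurable (f (i + 1))).mono (le_iSup₂_of_le (i + 1) i.succ_pos le_rfl) le_rfl
    exact htail.comap_le
  · exact le_iSup₂_of_le (f := fun i (_ : i ∈ ({0} : Set ℕ)) => mβ.comap (f i)) 0 rfl le_rfl

lemma infinitePi_map_tail_head {β : Type*} [MeasurableSpace β] (μ : Measure β)
    [IsProbabilityMeasure μ] :
    (Measure.infinitePi fun _ : ℕ => μ).map (fun x => (fun i => x (i + 1), x 0)) =
      (Measure.infinitePi fun _ : ℕ => μ).prod μ := by
  have hindep := iIndepFun.indepFun_tail_head (f := fun i (x : ℕ → β) => x i)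
    (fun i => measurable_pi_apply i)
    (iIndepFun_infinitePi (P := fun _ : ℕ => μ) (X := fun _ x => x) fun _ => measurable_id)
  rw [hindep.map_prod_eq_prod_map_map
      (measurable_pi_lambda _ fun i => measurable_pi_apply (i + 1)).aemeasurable
      (measurable_pi_apply 0).aemeasurable,
    Measure.infinitePi_map_eval, Measure.map_infinitePi_infinitePi_of_inj (add_left_injective 1)]

section RunningMaxLaw

variable (μ : Measure ℝ) [IsProbabilityMeasure μ]

lemma map_runningMax_zero :
    (Measure.infinitePi fun _ : ℕ => μ).map (runningMax 0) = Measure.dirac 0 := by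
  simp [funext runningMax_zero, Measure.map_const]

lemma map_runningMax_succ (n : ℕ) :
    (Measure.infinitePi fun _ : ℕ => μ).map (runningMax (n + 1)) =
      (((Measure.infinitePi fun _ : ℕ => μ).map (runningMax n)).prod μ).map
        fun q => max (q.1 + q.2) 0 := by
  have hsplit : runningMax (n + 1) = (fun q : ℝ × ℝ => max (q.1 + q.2) 0) ∘
      Prod.map (runningMax n) id ∘ fun x => (fun i => x (i + 1), x 0) :=
    funext (runningMax_succ n)
  rw [hsplit, ← Measure.map_map (by fun_prop) (by fun_prop),
    ← Measure.map_map (by fun_prop) (by fun_prop), infinitePi_map_tail_head,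
    ← Measure.map_prod_map _ _ (by fun_prop) measurable_id, Measure.map_id]

end RunningMaxLaw

noncomputable def geometricMixture {α : Type*} [MeasurableSpace α] (p : ℝ) (ν : ℕ → Measure α) :
    Measure α :=
  Measure.sum fun n => ENNReal.ofReal (p * (1 - p) ^ n) • ν n

lemma geometricMixture_eq_add_map_prod {α β : Type*} [MeasurableSpace α] [MeasurableSpace β]
    (μ : Measure β) [SFinite μ] {g : α × β → α} (hg : Measurable g) {ν : ℕ → Measure α}
    (hν : ∀ n, ν (n + 1) = ((ν n).prod μ).map g) {p : ℝ} (hp : p ≤ 1) :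
    geometricMixture p ν =
      ENNReal.ofReal p • ν 0 + ENNReal.ofReal (1 - p) • ((geometricMixture p ν).prod μ).map g := by
  rw [geometricMixture, Measure.prod_sum_left, Measure.map_sum hg.aemeasurable]
  ext s hs
  simp only [Measure.add_apply, Measure.smul_apply, Measure.sum_apply _ hs,
    Measure.prod_smul_left, Measure.map_smul, smul_eq_mul]
  rw [tsum_eq_zero_add' ENNReal.summable, ← ENNReal.tsum_mul_left]
  congr 1
  · simp
  · refine tsum_congr fun n => ?_
    rw [hν, ← mul_assoc, ← ENNReal.ofReal_mul (sub_nonneg.2 hp)]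
    ring_nf

section Mixtures

variable {Ω ι α β : Type*} [MeasurableSpace Ω] [MeasurableSpace ι] [MeasurableSpace α]
  [MeasurableSpace β] {P : Measure Ω}

lemma measurable_of_countable_index [Countable ι] [MeasurableSingletonClass ι] {N : Ω → ι}
    {Y : Ω → α} {f : ι → α → β} (hN : Measurable N) (hY : Measurable Y)
    (hf : ∀ n, Measurable (f n)) :
    Measurable fun ω => f (N ω) (Y ω) :=
  (measurable_from_prod_countable_left (f := fun q : α × ι => f q.2 q.1) hf).comp (hY.prodMk hN)

lemma map_eq_sum_of_indepFun [Countable ι] [MeasurableSingletonClass ι] {N : Ω → ι}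
    {Y : Ω → α} {f : ι → α → β} (hN : Measurable N) (hY : Measurable Y)
    (hf : ∀ n, Measurable (f n)) (hYN : IndepFun Y N P) :
    P.map (fun ω => f (N ω) (Y ω)) =
      Measure.sum fun n => P {ω | N ω = n} • (P.map Y).map (f n) := by
  ext s hs
  have hunion : (fun ω => f (N ω) (Y ω)) ⁻¹' s = ⋃ n, Y ⁻¹' (f n ⁻¹' s) ∩ N ⁻¹' {n} := by
    ext ω
    simp
  rw [Measure.map_apply (measurable_of_countable_index hN hY hf) hs, Measure.sum_apply _ hs,
    hunion, measure_iUnion]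
  · refine tsum_congr fun n => ?_
    rw [hYN.measure_inter_preimage_eq_mul _ _ (hf n hs) (measurableSet_singleton n),
      Measure.smul_apply, Measure.map_map (hf n) hY, Measure.map_apply ((hf n).comp hY) hs,
      smul_eq_mul, mul_comm]
    rfl
  · exact fun m n hmn => Set.disjoint_left.2 fun ω hm hn => hmn (hm.2.symm.trans hn.2)
  · exact fun n => (hY (hf n hs)).inter (hN (measurableSet_singleton n))

lemma map_mul_eq_of_indepFun {I Z : Ω → ℝ} (hI : Measurable I) (hZ : Measurable Z)
    (hIZ : IndepFun I Z P) (h01 : ∀ᵐ ω ∂P, I ω = 0 ∨ I ω = 1) :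
    P.map (fun ω => I ω * Z ω) =
      P {ω | I ω = 0} • Measure.dirac 0 + P {ω | I ω = 1} • P.map Z := by
  ext s hs
  have hae : (fun ω => I ω * Z ω) ⁻¹' s =ᵐ[P]
      (({ω | I ω = 0} ∩ {_ω | (0 : ℝ) ∈ s}) ∪ (I ⁻¹' {1} ∩ Z ⁻¹' s) : Set Ω) := by
    refine Filter.eventuallyEq_set.2 ?_
    filter_upwards [h01] with ω hω
    rcases hω with h | h <;> simp [h]
  rw [Measure.map_apply (by fun_prop) hs, measure_congr hae, measure_union,
    hIZ.measure_inter_preimage_eq_mul _ _ (measurableSet_singleton 1) hs]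
  · by_cases h0 : (0 : ℝ) ∈ s <;> simp [h0, Measure.map_apply hZ hs] <;> rfl
  · exact Set.disjoint_left.2 fun ω h0 h1 => by simp_all
  · exact (hI (measurableSet_singleton 1)).inter (hZ hs)

end Mixtures

lemma ae_eq_zero_or_eq_one {Ω : Type*} [MeasurableSpace Ω] {P : Measure Ω}
    [IsProbabilityMeasure P] {I : Ω → ℝ} (hI : Measurable I)
    (h : P {ω | I ω = 0} + P {ω | I ω = 1} = 1) :
    ∀ᵐ ω ∂P, I ω = 0 ∨ I ω = 1 := by
  have hdisj : Disjoint {ω | I ω = 0} {ω | I ω = 1} :=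
    Set.disjoint_left.2 fun ω (h0 : I ω = 0) (h1 : I ω = 1) => zero_ne_one (h0.symm.trans h1)
  have hmeas : MeasurableSet {ω | I ω = 0 ∨ I ω = 1} :=
    (hI (measurableSet_singleton 0)).union (hI (measurableSet_singleton 1))
  rw [ae_iff_measure_eq hmeas.nullMeasurableSet, measure_univ, Set.ofPred_or,
    measure_union hdisj (hI (measurableSet_singleton 1)), h]

lemma map_runningMax_geometric {Ω : Type*} [MeasurableSpace Ω] {P : Measure Ω}
    {μ : Measure ℝ} [IsProbabilityMeasure μ] {p : ℝ} {N : Ω → ℕ}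
    {ξ : ℕ → Ω → ℝ} (hN : Measurable N)
    (hNlaw : ∀ n, P {ω | N ω = n} = ENNReal.ofReal (p * (1 - p) ^ n))
    (hξmeas : ∀ i, Measurable (ξ i)) (hξindep : iIndepFun ξ P) (hξlaw : ∀ i, P.map (ξ i) = μ)
    (hNξ : IndepFun (fun ω i => ξ i ω) N P) :
    P.map (fun ω => runningMax (N ω) fun i => ξ (i + 1) ω) =
      geometricMixture p fun n => (Measure.infinitePi fun _ => μ).map (runningMax n) := by
  have hlaw_tail : P.map (fun ω i => ξ (i + 1) ω) = Measure.infinitePi fun _ => μ := by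
    rw [(hξindep.precomp (add_left_injective 1)).map_fun_eq_infinitePi_map fun i => hξmeas _]
    simp_rw [hξlaw]
  have hindep_tail : IndepFun (fun ω i => ξ (i + 1) ω) N P :=
    hNξ.comp (measurable_pi_lambda (fun (y : ℕ → ℝ) i => y (i + 1)) fun i =>
      measurable_pi_apply (i + 1)) measurable_id
  rw [map_eq_sum_of_indepFun hN (by fun_prop) measurable_runningMax hindep_tail, hlaw_tail]
  simp [geometricMixture, hNlaw]

lemma map_mul_max_add_eq {Ω : Type*} [MeasurableSpace Ω] {P : Measure Ω} [IsFiniteMeasure P]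
    {I X W : Ω → ℝ}
    (hI : Measurable I) (hX : Measurable X) (hW : Measurable W) (hIXW : iIndepFun ![I, X, W] P)
    (h01 : ∀ᵐ ω ∂P, I ω = 0 ∨ I ω = 1) :
    P.map (fun ω => I ω * max (W ω + X ω) 0) =
      P {ω | I ω = 0} • Measure.dirac 0 +
        P {ω | I ω = 1} • ((P.map W).prod (P.map X)).map fun q => max (q.1 + q.2) 0 := by
  have hmeas : ∀ i, Measurable (![I, X, W] i) := fun i => by fin_cases i <;> assumption
  have hI_indep : IndepFun I (fun ω => max (W ω + X ω) 0) P :=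
    ((hIXW.indepFun_prodMk hmeas 1 2 0 (by decide) (by decide)).comp
      (φ := fun q : ℝ × ℝ => max (q.2 + q.1) 0) (by fun_prop) measurable_id).symm
  have hWX : P.map (fun ω => (W ω, X ω)) = (P.map W).prod (P.map X) :=
    (indepFun_iff_map_prod_eq_prod_map_map hW.aemeasurable hX.aemeasurable).1
      (hIXW.indepFun (i := 2) (j := 1) (by decide))
  rw [map_mul_eq_of_indepFun hI (by fun_prop) hI_indep h01, ← hWX,
    Measure.map_map (by fun_prop) (by fun_prop)]
  rfl

theorem stmt_8 {Ω : Type*} [MeasurableSpace Ω] (P : Measure Ω) [IsProbabilityMeasure P]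
    (p : ℝ) (hp : p ∈ Set.Ioo (0 : ℝ) 1)
    (X I : Ω → ℝ) (hXmeas : Measurable X) (hImeas : Measurable I)
    (hI1 : P {ω' | I ω' = 1} = ENNReal.ofReal (1 - p))
    (hI0 : P {ω' | I ω' = 0} = ENNReal.ofReal p)
    (N : Ω → ℕ) (hNmeas : Measurable N)
    (hNlaw : ∀ n : ℕ, P {ω' | N ω' = n} = ENNReal.ofReal (p * (1 - p) ^ n))
    (ξ : ℕ → Ω → ℝ) (hξmeas : ∀ i, Measurable (ξ i))
    (hξindep : iIndepFun ξ P)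
    (hξlaw : ∀ i, Measure.map (ξ i) P = Measure.map X P)
    (hNξ : IndepFun (fun ω' => (fun i => ξ i ω')) N P)
    (S : ℕ → Ω → ℝ) (hS0 : ∀ ω', S 0 ω' = 0)
    (hS : ∀ k ω', S (k + 1) ω' = S k ω' + ξ (k + 1) ω')
    (W : Ω → ℝ)
    (hW : ∀ ω', W ω' =
      (Finset.range (N ω' + 1)).sup' Finset.nonempty_range_add_one (fun k => S k ω'))
    (hIXW : iIndepFun ![I, X, W] P) :
    Measure.map W P = Measure.map (fun ω' => I ω' * max (W ω' + X ω') 0) P := by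
  obtain ⟨hp0, hp1⟩ := hp
  have : IsProbabilityMeasure (P.map X) := Measure.isProbabilityMeasure_map hXmeas.aemeasurable
  have hW_runningMax : W = fun ω => runningMax (N ω) fun i => ξ (i + 1) ω := by
    funext ω
    rw [hW, runningMax, eq_partialSum (S := (S · ω)) (hS0 ω) (fun k => hS k ω)]
  have hWmeas : Measurable W := by
    rw [hW_runningMax]
    exact measurable_of_countable_index hNmeas (by fun_prop) measurable_runningMax
  have h01 : ∀ᵐ ω ∂P, I ω = 0 ∨ I ω = 1 := by
    refine ae_eq_zero_or_eq_one hImeas ?_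
    rw [hI0, hI1, ← ENNReal.ofReal_add hp0.le (by linarith)]
    norm_num
  rw [map_mul_max_add_eq hImeas hXmeas hWmeas hIXW h01, hI0, hI1, hW_runningMax,
    map_runningMax_geometric hNmeas hNlaw hξmeas hξindep hξlaw hNξ, ← map_runningMax_zero (P.map X)]
  exact geometricMixture_eq_add_map_prod _ (by fun_prop) (map_runningMax_succ _) hp1.le
end

section
/- Let U, V be nonnegative random variables, p ∈ (0,1), I ∼ Bernoulli(1-p). Then Z ∼ U + I·(Z - V)^+ (with U, V, I, Z independent on the right) holds if and only if Z ∼ U + W, where W := max_{0 ≤ k ≤ N} S_k, (S_k) is a random walk with i.i.d. increments distributed as U - V (with U, V independent), N is independent with N+1 geometric of parameter p, and U, W are independent. Moreover then W ∼ I·(Z - V)^+. -/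
/-!
Let `μ` be the law of `U - V` and let Lindley's map send a law `ρ` to the law of `I * (X + Y)⁺`,
where `I ∼ Bernoulli(1 - p)`, `X ∼ μ` and `Y ∼ ρ` are independent. On distribution functions
it acts by `F ↦ 1_{t ≥ 0} (p + (1 - p) ∫ F (t - x) dμ(x))`. That is a contraction of ratio
`1 - p` in the sup norm, so the map has at most one fixed point among probability laws.

The law of `W = max_{k ≤ N} S_k` is such a fixed point. Conditioning on `N` gives
`F_W = ∑ p (1 - p)ⁿ Fₙ`, where `Fₙ` is the distribution function of `max_{k ≤ n} S_k`.
Splitting off the first step of the walk gives `F_{n+1} = 1_{t ≥ 0} ∫ Fₙ (t - x) dμ(x)`.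

If `Z ∼ U + ρ` with the summands independent, then `Z - V ∼ μ ∗ ρ`, so the law of
`I * (Z - V)⁺` is the image of `ρ` under Lindley's map. If `Z` solves the equation, we can take
`ρ` to be the law of `I * (Z - V)⁺`, so this law is a fixed point and therefore equals the law
of `W`. If instead `Z ∼ U + W`, the law of `I * (Z - V)⁺` is the image of the law of `W`, which
is again the law of `W`.
-/

open MeasureTheory ProbabilityTheory

lemma abs_cdf_le_one (μ : Measure ℝ) (t : ℝ) : |cdf μ t| ≤ 1 :=
  abs_le.2 ⟨by linarith [cdf_nonneg μ t], cdf_le_one μ t⟩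

lemma integrable_comp_sub_of_abs_le {F : ℝ → ℝ} {C : ℝ} (hF : Measurable F)
    (hFC : ∀ t, |F t| ≤ C) (μ : Measure ℝ) [IsFiniteMeasure μ] (t : ℝ) :
    Integrable (fun x => F (t - x)) μ :=
  .of_bound (hF.comp (measurable_const.sub measurable_id)).aestronglyMeasurable C
    (ae_of_all _ fun x => hFC (t - x))

lemma cdf_conv (μ ν : Measure ℝ) [IsProbabilityMeasure μ] [IsProbabilityMeasure ν] (t : ℝ) :
    cdf (μ ∗ ν) t = ∫ x, cdf ν (t - x) ∂μ := by
  have hsection : ∀ x : ℝ, Prod.mk x ⁻¹' ((fun q : ℝ × ℝ => q.1 + q.2) ⁻¹' Set.Iic t)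
      = Set.Iic (t - x) := fun x => by ext y; simp [le_sub_iff_add_le']
  have hint := integrable_comp_sub_of_abs_le (monotone_cdf ν).measurable (abs_cdf_le_one ν) μ t
  rw [cdf_eq_real, measureReal_def, Measure.conv,
    Measure.map_apply measurable_add measurableSet_Iic,
    Measure.prod_apply (measurable_add measurableSet_Iic)]
  simp_rw [hsection, ← ofReal_cdf]
  rw [← ofReal_integral_eq_lintegral_ofReal hint (ae_of_all _ fun x => cdf_nonneg ν _),
    ENNReal.toReal_ofReal (integral_nonneg fun x => cdf_nonneg ν _)]

instance isProbabilityMeasure_map_max_zero (μ : Measure ℝ) [IsProbabilityMeasure μ] :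
    IsProbabilityMeasure (μ.map (max · 0)) :=
  Measure.isProbabilityMeasure_map (by fun_prop)

lemma cdf_map_max_zero (μ : Measure ℝ) [IsProbabilityMeasure μ] (t : ℝ) :
    cdf (μ.map (max · 0)) t = if 0 ≤ t then cdf μ t else 0 := by
  rw [cdf_eq_real, measureReal_def, Measure.map_apply (by fun_prop) measurableSet_Iic]
  split_ifs with ht
  · rw [cdf_eq_real, measureReal_def]
    congr 2
    ext x
    simp [ht]
  · have hempty : (max · 0) ⁻¹' Set.Iic t = (∅ : Set ℝ) :=
      Set.eq_empty_of_forall_notMem fun x hx => ht ((le_max_right x 0).trans hx)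
    simp [hempty]

section Bernoulli

variable {Ω : Type*} [MeasurableSpace Ω] {P : Measure Ω} [IsProbabilityMeasure P] {I : Ω → ℝ}
  {p : ℝ}

lemma map_eq_of_bernoulli (hI : Measurable I) (hp : p ∈ Set.Icc 0 1)
    (hI1 : P {ω | I ω = 1} = ENNReal.ofReal (1 - p)) (hI0 : P {ω | I ω = 0} = ENNReal.ofReal p) :
    P.map I = ENNReal.ofReal p • Measure.dirac 0 + ENNReal.ofReal (1 - p) • Measure.dirac 1 := by
  have h0 : P.map I {0} = ENNReal.ofReal p := by
    rw [Measure.map_apply hI (measurableSet_singleton 0)]; exact hI0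
  have h1 : P.map I {1} = ENNReal.ofReal (1 - p) := by
    rw [Measure.map_apply hI (measurableSet_singleton 1)]; exact hI1
  have hsum : ENNReal.ofReal p + ENNReal.ofReal (1 - p) = 1 := by
    rw [← ENNReal.ofReal_add hp.1 (sub_nonneg.2 hp.2)]; simp
  have hpair : P.map I {0, 1} = 1 := by
    rw [Set.insert_eq, measure_union (Set.disjoint_singleton.2 zero_ne_one)
      (measurableSet_singleton 1), h0, h1, hsum]
  have := Measure.isProbabilityMeasure_map (μ := P) hI.aemeasurable
  have hnull : P.map I ({0, 1}ᶜ) = 0 := by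
    rw [measure_compl (by measurability) (measure_ne_top _ _), hpair, measure_univ, tsub_self]
  ext s hs
  rw [← measure_inter_add_sdiff s (show MeasurableSet ({0, 1} : Set ℝ) by measurability),
    measure_mono_null (Set.sdiff_subset_compl s _) hnull, add_zero]
  by_cases hs0 : (0 : ℝ) ∈ s <;> by_cases hs1 : (1 : ℝ) ∈ s <;>
    simp [Set.inter_insert_of_mem, Set.inter_insert_of_notMem, *]

lemma map_mul_eq_of_bernoulli {Y : Ω → ℝ} (hI : Measurable I) (hY : Measurable Y)
    (hp : p ∈ Set.Icc 0 1)
    (hI1 : P {ω | I ω = 1} = ENNReal.ofReal (1 - p)) (hI0 : P {ω | I ω = 0} = ENNReal.ofReal p)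
    (hIY : IndepFun I Y P) :
    P.map (fun ω => I ω * Y ω)
      = ENNReal.ofReal p • Measure.dirac 0 + ENNReal.ofReal (1 - p) • P.map Y := by
  have := Measure.isProbabilityMeasure_map (μ := P) hY.aemeasurable
  rw [show (fun ω => I ω * Y ω) = I * Y from rfl, hIY.map_mul_eq_map_mconv_map hI hY,
    map_eq_of_bernoulli hI hp hI1 hI0, Measure.add_mconv, Measure.mconv_smul_left,
    Measure.mconv_smul_left, Measure.dirac_one_mconv, Measure.dirac_mconv]
  simp

end Bernoulli

lemma ProbabilityTheory.iIndepFun.indepFun_zero_succ {Ω β : Type*} [MeasurableSpace Ω]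
    [MeasurableSpace β] {μ : Measure Ω} {f : ℕ → Ω → β} (hf : iIndepFun f μ)
    (hmeas : ∀ i, Measurable (f i)) :
    IndepFun (f 0) (fun ω i => f (i + 1) ω) μ := by
  set m : ℕ → MeasurableSpace Ω := fun i => MeasurableSpace.comap (f i) inferInstance
  have h : Indep (⨆ i ∈ ({0} : Set ℕ), m i) (⨆ i ∈ Set.range Nat.succ, m i) μ :=
    indep_iSup_of_disjoint (fun i => (hmeas i).comap_le) ((iIndepFun_iff_iIndep _ _ _).1 hf)
      (by simp)
  rw [IndepFun_iff_Indep]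
  refine indep_of_indep_of_le_right (indep_of_indep_of_le_left h ?_) ?_
  · exact le_biSup m (Set.mem_singleton 0)
  have htail : Measurable[⨆ i ∈ Set.range Nat.succ, m i] (fun ω i => f (i + 1) ω) :=
    @measurable_pi_lambda Ω ℕ (fun _ => β) (⨆ i ∈ Set.range Nat.succ, m i) _ _ fun i =>
      (comap_measurable (f (i + 1))).mono (le_biSup m ⟨i, rfl⟩) le_rfl
  exact htail.comap_le

lemma MeasureTheory.Measure.infinitePi_map_zero_succ {β : Type*} [MeasurableSpace β]
    (μ : Measure β) [IsProbabilityMeasure μ] :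
    (Measure.infinitePi fun _ : ℕ => μ).map (fun x => (x 0, fun i => x (i + 1)))
      = μ.prod (Measure.infinitePi fun _ : ℕ => μ) := by
  have hind := (iIndepFun_infinitePi (P := fun _ : ℕ => μ) (X := fun _ x => x)
    fun _ => measurable_id).indepFun_zero_succ fun i => measurable_pi_apply i
  rw [(indepFun_iff_map_prod_eq_prod_map_map (measurable_pi_apply 0).aemeasurable
    (measurable_pi_lambda _ fun i => measurable_pi_apply (i + 1)).aemeasurable).1 hind,
    Measure.infinitePi_map_eval]
  congr
  exact Measure.map_infinitePi_infinitePi_of_inj (P := fun _ : ℕ => μ) Nat.succ_injective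

lemma measure_preimage_randomIndex {Ω E β : Type*} [MeasurableSpace Ω] [MeasurableSpace E]
    [MeasurableSpace β] {P : Measure Ω} {X : Ω → E} {N : Ω → ℕ} (hX : Measurable X)
    (hN : Measurable N) (hXN : IndepFun X N P) {g : ℕ → E → β} (hg : ∀ n, Measurable (g n))
    {s : Set β} (hs : MeasurableSet s) :
    P ((fun ω => g (N ω) (X ω)) ⁻¹' s) = ∑' n, P.map X (g n ⁻¹' s) * P {ω | N ω = n} := by
  have hunion : (fun ω => g (N ω) (X ω)) ⁻¹' s = ⋃ n, X ⁻¹' (g n ⁻¹' s) ∩ N ⁻¹' {n} := by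
    ext ω; simp
  rw [hunion, measure_iUnion]
  · refine tsum_congr fun n => ?_
    rw [hXN.measure_inter_preimage_eq_mul _ _ (hg n hs) (measurableSet_singleton n),
      Measure.map_apply hX (hg n hs)]
    rfl
  · exact fun m n hmn => Set.disjoint_left.2 fun ω hm hn => hmn (hm.2.symm.trans hn.2)
  · exact fun n => (hX (hg n hs)).inter (hN (measurableSet_singleton n))

noncomputable def lindleyOp (μ : Measure ℝ) (p : ℝ) (G : ℝ → ℝ) (t : ℝ) : ℝ :=
  if 0 ≤ t then p + (1 - p) * ∫ x, G (t - x) ∂μ else 0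

section LindleyOp

variable {μ : Measure ℝ} [IsProbabilityMeasure μ] {p C : ℝ} {F G : ℝ → ℝ}

lemma abs_lindleyOp_sub_le (hF : Measurable F) (hG : Measurable G) (hFC : ∀ t, |F t| ≤ C)
    (hGC : ∀ t, |G t| ≤ C) {c : ℝ} (hFG : ∀ t, |F t - G t| ≤ c) (t : ℝ) :
    |lindleyOp μ p F t - lindleyOp μ p G t| ≤ |1 - p| * c := by
  have hc : 0 ≤ c := (abs_nonneg _).trans (hFG 0)
  unfold lindleyOp
  split_ifs
  · rw [add_sub_add_left_eq_sub, ← mul_sub, abs_mul,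
      ← integral_sub (integrable_comp_sub_of_abs_le hF hFC μ t)
        (integrable_comp_sub_of_abs_le hG hGC μ t)]
    gcongr
    calc |∫ x, F (t - x) - G (t - x) ∂μ| ≤ ∫ x, |F (t - x) - G (t - x)| ∂μ :=
          abs_integral_le_integral_abs
      _ ≤ ∫ _, c ∂μ := integral_mono_of_nonneg (ae_of_all _ fun _ => abs_nonneg _)
          (integrable_const c) (ae_of_all _ fun x => hFG (t - x))
      _ = c := by simp
  · simpa using mul_nonneg (abs_nonneg (1 - p)) hc

lemma eq_of_lindleyOp_eq_self (hp : |1 - p| < 1) (hF : Measurable F) (hG : Measurable G)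
    (hFC : ∀ t, |F t| ≤ C) (hGC : ∀ t, |G t| ≤ C)
    (hFfix : lindleyOp μ p F = F) (hGfix : lindleyOp μ p G = G) : F = G := by
  have hcontract : ∀ n t, |F t - G t| ≤ |1 - p| ^ n * (2 * C) := by
    intro n
    induction n with
    | zero => intro t; simpa [two_mul] using (abs_sub _ _).trans (add_le_add (hFC t) (hGC t))
    | succ n ih =>
      intro t
      rw [← hFfix, ← hGfix, pow_succ', mul_assoc]
      exact abs_lindleyOp_sub_le hF hG hFC hGC ih t
  funext t
  have hlim : Filter.Tendsto (fun n => |1 - p| ^ n * (2 * C)) Filter.atTop (nhds 0) := by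
    simpa using (tendsto_pow_atTop_nhds_zero_of_abs_lt_one (by simpa using hp)).mul_const (2 * C)
  exact sub_eq_zero.1 (abs_nonpos_iff.1 (ge_of_tendsto' hlim (hcontract · t)))

lemma lindleyOp_tsum_geometric (hp : p ∈ Set.Ioc 0 1) {F : ℕ → ℝ → ℝ}
    (hF : ∀ n, Measurable (F n)) (hF1 : ∀ n t, |F n t| ≤ 1)
    (hF0 : ∀ t, F 0 t = if 0 ≤ t then 1 else 0)
    (hFsucc : ∀ n t, F (n + 1) t = if 0 ≤ t then ∫ x, F n (t - x) ∂μ else 0) :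
    lindleyOp μ p (fun t => ∑' n, p * (1 - p) ^ n * F n t)
      = fun t => ∑' n, p * (1 - p) ^ n * F n t := by
  have hc : ∀ n, 0 ≤ p * (1 - p) ^ n := fun n =>
    mul_nonneg hp.1.le (pow_nonneg (sub_nonneg.2 hp.2) n)
  have hcsum : Summable fun n => p * (1 - p) ^ n :=
    (summable_geometric_of_lt_one (sub_nonneg.2 hp.2) (by linarith [hp.1])).mul_left p
  have hterm : ∀ n t, ‖p * (1 - p) ^ n * F n t‖ ≤ p * (1 - p) ^ n := fun n t => by
    rw [norm_mul, Real.norm_of_nonneg (hc n), Real.norm_eq_abs]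
    exact mul_le_of_le_one_right (hc n) (hF1 n t)
  funext t
  unfold lindleyOp
  split_ifs with ht
  · have hswap : ∫ x, ∑' n, p * (1 - p) ^ n * F n (t - x) ∂μ
        = ∑' n, p * (1 - p) ^ n * F (n + 1) t := by
      rw [← integral_tsum_of_summable_integral_norm]
      · simp_rw [integral_const_mul, hFsucc _ t, if_pos ht]
      · exact fun n => (integrable_comp_sub_of_abs_le (hF n) (hF1 n) μ t).const_mul _
      · refine hcsum.of_nonneg_of_le (fun n => integral_nonneg fun _ => norm_nonneg _) fun n => ?_
        calc ∫ x, ‖p * (1 - p) ^ n * F n (t - x)‖ ∂μ ≤ ∫ _, p * (1 - p) ^ n ∂μ :=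
              integral_mono_of_nonneg (ae_of_all _ fun _ => norm_nonneg _) (integrable_const _)
                (ae_of_all _ fun x => hterm n (t - x))
          _ = p * (1 - p) ^ n := by simp
    rw [hswap, (hcsum.of_norm_bounded (hterm · t)).tsum_eq_zero_add, hF0, if_pos ht,
      ← tsum_mul_left]
    congr 1
    · ring
    · exact tsum_congr fun n => by ring
  · have hzero : ∀ n, F n t = 0 := fun n => by cases n <;> simp [hF0, hFsucc, ht]
    simp [hzero]

end LindleyOp

noncomputable def lindleyMap (μ : Measure ℝ) (p : ℝ) (ρ : Measure ℝ) : Measure ℝ :=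
  ENNReal.ofReal p • Measure.dirac 0 + ENNReal.ofReal (1 - p) • (μ ∗ ρ).map (max · 0)

section LindleyMap

variable (μ : Measure ℝ) [IsProbabilityMeasure μ] {p : ℝ} (ρ : Measure ℝ) [IsProbabilityMeasure ρ]

lemma isProbabilityMeasure_lindleyMap (hp : p ∈ Set.Icc 0 1) :
    IsProbabilityMeasure (lindleyMap μ p ρ) := by
  constructor
  simp [lindleyMap, ← ENNReal.ofReal_add hp.1 (sub_nonneg.2 hp.2)]

lemma cdf_lindleyMap (hp : p ∈ Set.Icc 0 1) :
    cdf (lindleyMap μ p ρ) = lindleyOp μ p (cdf ρ) := by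
  have := isProbabilityMeasure_lindleyMap μ ρ hp
  have := (Measure.dirac (0 : ℝ)).smul_finite (ENNReal.ofReal_ne_top (r := p))
  have := ((μ ∗ ρ).map (max · 0)).smul_finite (ENNReal.ofReal_ne_top (r := 1 - p))
  ext t
  rw [cdf_eq_real, lindleyMap, measureReal_add_apply, measureReal_ennreal_smul_apply,
    measureReal_ennreal_smul_apply, ← cdf_eq_real ((μ ∗ ρ).map (max · 0)), cdf_map_max_zero,
    cdf_conv, lindleyOp, ENNReal.toReal_ofReal hp.1, ENNReal.toReal_ofReal (sub_nonneg.2 hp.2)]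
  split_ifs with ht <;> simp [ht, measureReal_def]

lemma eq_of_lindleyMap_eq_self (hp : p ∈ Set.Ioc 0 1) (ρ' : Measure ℝ) [IsProbabilityMeasure ρ']
    (hρ : lindleyMap μ p ρ = ρ) (hρ' : lindleyMap μ p ρ' = ρ') : ρ = ρ' := by
  have hp' : p ∈ Set.Icc 0 1 := Set.Ioc_subset_Icc_self hp
  have h : (cdf ρ : ℝ → ℝ) = cdf ρ' := eq_of_lindleyOp_eq_self (μ := μ) (p := p) ?_
    (monotone_cdf ρ).measurable (monotone_cdf ρ').measurable (abs_cdf_le_one ρ)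
    (abs_cdf_le_one ρ') ?_ ?_
  · exact Measure.eq_of_cdf ρ ρ' (StieltjesFunction.ext (congrFun h))
  · rw [abs_lt]; constructor <;> linarith [hp.1, hp.2]
  · rw [← cdf_lindleyMap μ ρ hp', hρ]
  · rw [← cdf_lindleyMap μ ρ' hp', hρ']

end LindleyMap

noncomputable def runMax (n : ℕ) (x : ℕ → ℝ) : ℝ :=
  (Finset.range (n + 1)).sup' Finset.nonempty_range_add_one fun k => ∑ i ∈ Finset.range k, x i

lemma sup'_range_eq_runMax {S x : ℕ → ℝ} (hS0 : S 0 = 0) (hS : ∀ k, S (k + 1) = S k + x k)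
    (n : ℕ) : (Finset.range (n + 1)).sup' Finset.nonempty_range_add_one S = runMax n x := by
  have hS_sum : ∀ k, S k = ∑ i ∈ Finset.range k, x i := by
    intro k
    induction k with
    | zero => simp [hS0]
    | succ k ih => rw [hS, ih, Finset.sum_range_succ]
  simp only [runMax, hS_sum]

lemma runMax_zero (x : ℕ → ℝ) : runMax 0 x = 0 := by simp [runMax]

lemma runMax_succ (n : ℕ) (x : ℕ → ℝ) :
    runMax (n + 1) x = max (x 0 + runMax n fun i => x (i + 1)) 0 := by
  refine eq_of_forall_ge_iff fun t => ?_
  rw [max_le_iff, ← le_sub_iff_add_le', runMax, runMax, Finset.sup'_le_iff, Finset.sup'_le_iff]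
  simp only [Finset.mem_range]
  rw [Nat.forall_lt_succ_left']
  simp only [Finset.sum_range_succ' x, Finset.sum_range_zero, le_sub_iff_add_le]
  exact and_comm

@[fun_prop]
lemma measurable_runMax (n : ℕ) : Measurable (runMax n) :=
  Finset.measurable_range_sup'' fun _ _ => Finset.measurable_sum _ fun i _ => measurable_pi_apply i

lemma measurable_runMax_randomIndex {Ω : Type*} [MeasurableSpace Ω] {X : Ω → ℕ → ℝ}
    {N : Ω → ℕ} (hX : Measurable X) (hN : Measurable N) :
    Measurable fun ω => runMax (N ω) (X ω) :=
  (measurable_from_prod_countable_left (f := fun q : (ℕ → ℝ) × ℕ => runMax q.2 q.1)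
    fun n => measurable_runMax n).comp (hX.prodMk hN)

section RunMaxLaw

variable (μ : Measure ℝ) [IsProbabilityMeasure μ]

lemma map_runMax_succ (n : ℕ) :
    (Measure.infinitePi fun _ : ℕ => μ).map (runMax (n + 1))
      = (μ ∗ (Measure.infinitePi fun _ : ℕ => μ).map (runMax n)).map (max · 0) := by
  have hsplit : runMax (n + 1) = (fun q : ℝ × (ℕ → ℝ) => max (q.1 + runMax n q.2) 0) ∘
      (fun x => (x 0, fun i => x (i + 1))) := funext (runMax_succ n)
  have hpair : Measurable fun x : ℕ → ℝ => (x 0, fun i => x (i + 1)) :=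
    (measurable_pi_apply 0).prodMk (measurable_pi_lambda _ fun i => measurable_pi_apply (i + 1))
  have hprod : μ.prod ((Measure.infinitePi fun _ : ℕ => μ).map (runMax n))
      = (μ.prod (Measure.infinitePi fun _ : ℕ => μ)).map (Prod.map id (runMax n)) := by
    simpa using Measure.map_prod_map μ _ measurable_id (measurable_runMax n)
  rw [hsplit, ← Measure.map_map (by fun_prop) hpair, Measure.infinitePi_map_zero_succ,
    Measure.conv, hprod, Measure.map_map (by fun_prop) (by fun_prop),
    Measure.map_map (by fun_prop) (by fun_prop)]
  rfl

lemma cdf_map_runMax_zero (t : ℝ) :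
    cdf ((Measure.infinitePi fun _ : ℕ => μ).map (runMax 0)) t = if 0 ≤ t then 1 else 0 := by
  rw [show runMax 0 = fun _ => 0 from funext runMax_zero, Measure.map_const, measure_univ,
    one_smul, cdf_eq_real]
  split_ifs with ht <;> simp [ht, measureReal_def]

lemma cdf_map_runMax_succ (n : ℕ) (t : ℝ) :
    cdf ((Measure.infinitePi fun _ : ℕ => μ).map (runMax (n + 1))) t
      = if 0 ≤ t then ∫ x, cdf ((Measure.infinitePi fun _ : ℕ => μ).map (runMax n)) (t - x) ∂μ
        else 0 := by
  have := Measure.isProbabilityMeasure_map (μ := Measure.infinitePi fun _ : ℕ => μ)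
    (measurable_runMax n).aemeasurable
  rw [map_runMax_succ, cdf_map_max_zero, cdf_conv]

end RunMaxLaw

lemma lindleyMap_map_runMax_geometric {Ω : Type*} [MeasurableSpace Ω] {P : Measure Ω}
    [IsProbabilityMeasure P] {μ : Measure ℝ} [IsProbabilityMeasure μ] {p : ℝ}
    (hp : p ∈ Set.Ioc 0 1) {ξ : ℕ → Ω → ℝ} (hξ : ∀ i, Measurable (ξ i))
    (hξindep : iIndepFun ξ P) (hξlaw : ∀ i, P.map (ξ i) = μ) {N : Ω → ℕ} (hN : Measurable N)
    (hNlaw : ∀ n, P {ω | N ω = n} = ENNReal.ofReal (p * (1 - p) ^ n))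
    (hNξ : IndepFun (fun ω i => ξ i ω) N P) :
    lindleyMap μ p (P.map fun ω => runMax (N ω) fun i => ξ (i + 1) ω)
      = P.map fun ω => runMax (N ω) fun i => ξ (i + 1) ω := by
  set ν := Measure.infinitePi fun _ : ℕ => μ
  set X : Ω → ℕ → ℝ := fun ω i => ξ (i + 1) ω
  have hX : Measurable X := measurable_pi_lambda _ fun i => hξ (i + 1)
  have hXlaw : P.map X = ν := by
    rw [(hξindep.precomp Nat.succ_injective).map_fun_eq_infinitePi_map fun i => hξ (i + 1)]
    simp [hξlaw, ν]
  have hXN : IndepFun X N P :=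
    hNξ.comp (measurable_pi_lambda _ fun i => measurable_pi_apply (i + 1)) measurable_id
  have hW : Measurable fun ω => runMax (N ω) (X ω) := measurable_runMax_randomIndex hX hN
  have := Measure.isProbabilityMeasure_map (μ := P) hW.aemeasurable
  have := fun n => Measure.isProbabilityMeasure_map (μ := ν) (measurable_runMax n).aemeasurable
  have hcdf : ∀ t, cdf (P.map fun ω => runMax (N ω) (X ω)) t
      = ∑' n, p * (1 - p) ^ n * cdf (ν.map (runMax n)) t := by
    intro t
    rw [cdf_eq_real, measureReal_def, Measure.map_apply hW measurableSet_Iic,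
      measure_preimage_randomIndex hX hN hXN measurable_runMax measurableSet_Iic, hXlaw]
    simp_rw [hNlaw, ← Measure.map_apply (measurable_runMax _) measurableSet_Iic, ← ofReal_cdf,
      ← ENNReal.ofReal_mul (cdf_nonneg _ _)]
    rw [ENNReal.tsum_toReal_eq fun _ => ENNReal.ofReal_ne_top]
    refine tsum_congr fun n => ?_
    rw [ENNReal.toReal_ofReal (mul_nonneg (cdf_nonneg _ _)
      (mul_nonneg hp.1.le (pow_nonneg (sub_nonneg.2 hp.2) n))), mul_comm]
  have hp' : p ∈ Set.Icc 0 1 := Set.Ioc_subset_Icc_self hp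
  have := isProbabilityMeasure_lindleyMap μ (P.map fun ω => runMax (N ω) (X ω)) hp'
  refine Measure.eq_of_cdf _ _ (StieltjesFunction.ext fun t => ?_)
  rw [cdf_lindleyMap μ _ hp', funext hcdf]
  exact congrFun (lindleyOp_tsum_geometric hp (F := fun n => cdf (ν.map (runMax n)))
    (fun n => (monotone_cdf _).measurable) (fun n => abs_cdf_le_one _)
    (cdf_map_runMax_zero μ) (cdf_map_runMax_succ μ)) t

section Queue

variable {Ω : Type*} [MeasurableSpace Ω] {P : Measure Ω} {U V I Z : Ω → ℝ}

lemma indepFun_mul_max_sub (hU : Measurable U) (hV : Measurable V) (hI : Measurable I)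
    (hZ : Measurable Z) (hindep : iIndepFun ![U, V, I, Z] P) :
    IndepFun U (fun ω => I ω * max (Z ω - V ω) 0) P := by
  have hmeas : ∀ i, Measurable (![U, V, I, Z] i) := by
    intro i; fin_cases i <;> assumption
  exact (hindep.indepFun_finset {0} {1, 2, 3} (by decide) hmeas).comp
    (φ := fun v : ({0} : Finset (Fin 4)) → ℝ => v ⟨0, by decide⟩)
    (ψ := fun v : ({1, 2, 3} : Finset (Fin 4)) → ℝ =>
      v ⟨2, by decide⟩ * max (v ⟨3, by decide⟩ - v ⟨1, by decide⟩) 0)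
    (by fun_prop) (by fun_prop)

lemma map_mul_max_sub_eq_lindleyMap [IsProbabilityMeasure P] (hU : Measurable U)
    (hV : Measurable V) (hI : Measurable I) (hZ : Measurable Z) {p : ℝ} (hp : p ∈ Set.Icc 0 1)
    (hI1 : P {ω | I ω = 1} = ENNReal.ofReal (1 - p)) (hI0 : P {ω | I ω = 0} = ENNReal.ofReal p)
    (hindep : iIndepFun ![U, V, I, Z] P) {ρ : Measure ℝ} [IsProbabilityMeasure ρ]
    (hZρ : P.map Z = P.map U ∗ ρ) :
    P.map (fun ω => I ω * max (Z ω - V ω) 0) = lindleyMap (P.map fun ω => U ω - V ω) p ρ := by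
  have hUV : IndepFun U (-V) P :=
    (hindep.indepFun (show (0 : Fin 4) ≠ 1 by decide)).comp measurable_id measurable_neg
  have hZV : IndepFun Z (-V) P :=
    (hindep.indepFun (show (3 : Fin 4) ≠ 1 by decide)).comp measurable_id measurable_neg
  have hIY : IndepFun I (fun ω => max (Z ω - V ω) 0) P :=
    (hindep.indepFun_prodMk (fun i => by fin_cases i <;> assumption) 3 1 2 (by decide)
      (by decide)).symm.comp measurable_id
      (by fun_prop : Measurable fun q : ℝ × ℝ => max (q.1 - q.2) 0)
  have hZV_law : P.map (fun ω => Z ω - V ω) = (P.map fun ω => U ω - V ω) ∗ ρ := by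
    rw [show (fun ω => Z ω - V ω) = Z + -V from funext fun ω => sub_eq_add_neg _ _,
      show (fun ω => U ω - V ω) = U + -V from funext fun ω => sub_eq_add_neg _ _,
      hZV.map_add_eq_map_conv_map hZ hV.neg, hUV.map_add_eq_map_conv_map hU hV.neg, hZρ,
      Measure.conv_assoc, Measure.conv_comm ρ, ← Measure.conv_assoc]
  rw [map_mul_eq_of_bernoulli hI (by fun_prop) hp hI1 hI0 hIY, lindleyMap, ← hZV_law,
    Measure.map_map (by fun_prop) (by fun_prop)]
  rfl

end Queue

theorem stmt_10_general {Ω Ω' : Type*} [MeasurableSpace Ω] [MeasurableSpace Ω']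
    (P : Measure Ω) [IsProbabilityMeasure P] (P' : Measure Ω') [IsProbabilityMeasure P']
    (p : ℝ) (hp : p ∈ Set.Ioo (0 : ℝ) 1)
    (U V I Z : Ω → ℝ)
    (hUmeas : Measurable U) (hVmeas : Measurable V) (hImeas : Measurable I)
    (hZmeas : Measurable Z)
    (hI1 : P {ω' | I ω' = 1} = ENNReal.ofReal (1 - p))
    (hI0 : P {ω' | I ω' = 0} = ENNReal.ofReal p)
    (hindep : iIndepFun ![U, V, I, Z] P)
    -- auxiliary space carrying the random walk with increments distributed as U - V,
    -- the geometric time N, and an independent copy U'' of U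
    (ξ : ℕ → Ω' → ℝ) (hξmeas : ∀ i, Measurable (ξ i))
    (hξindep : iIndepFun ξ P')
    (hξlaw : ∀ i, Measure.map (ξ i) P' = Measure.map (fun ω' => U ω' - V ω') P)
    (N : Ω' → ℕ) (hNmeas : Measurable N)
    (hNlaw : ∀ n : ℕ, P' {ω' | N ω' = n} = ENNReal.ofReal (p * (1 - p) ^ n))
    (hNξ : IndepFun (fun ω' => (fun i => ξ i ω')) N P')
    (S : ℕ → Ω' → ℝ) (hS0 : ∀ ω', S 0 ω' = 0)
    (hS : ∀ k ω', S (k + 1) ω' = S k ω' + ξ (k + 1) ω')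
    (W : Ω' → ℝ)
    (hW : ∀ ω', W ω' =
      (Finset.range (N ω' + 1)).sup' Finset.nonempty_range_add_one (fun k => S k ω'))
    (U'' : Ω' → ℝ) (hU''meas : Measurable U'')
    (hU''law : Measure.map U'' P' = Measure.map U P)
    (hU''W : IndepFun U'' W P') :
    (Measure.map Z P =
        Measure.map (fun ω' => U ω' + I ω' * max (Z ω' - V ω') 0) P ↔
      Measure.map Z P = Measure.map (fun ω' => U'' ω' + W ω') P') ∧
    (Measure.map Z P =
        Measure.map (fun ω' => U ω' + I ω' * max (Z ω' - V ω') 0) P →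
      Measure.map W P' = Measure.map (fun ω' => I ω' * max (Z ω' - V ω') 0) P) := by
  have hW_runMax : W = fun ω => runMax (N ω) fun i => ξ (i + 1) ω :=
    funext fun ω => (hW ω).trans (sup'_range_eq_runMax (hS0 ω) (fun k => hS k ω) _)
  have hWmeas : Measurable W := hW_runMax ▸ measurable_runMax_randomIndex
    (measurable_pi_lambda _ fun i => hξmeas (i + 1)) hNmeas
  have hLmeas : Measurable fun ω => I ω * max (Z ω - V ω) 0 := by fun_prop
  have := Measure.isProbabilityMeasure_map (μ := P) (hUmeas.sub hVmeas).aemeasurable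
  have := Measure.isProbabilityMeasure_map (μ := P) hLmeas.aemeasurable
  have := Measure.isProbabilityMeasure_map (μ := P') hWmeas.aemeasurable
  have hWfix : lindleyMap (P.map fun ω => U ω - V ω) p (P'.map W) = P'.map W := hW_runMax ▸
    lindleyMap_map_runMax_geometric ⟨hp.1, hp.2.le⟩ hξmeas hξindep hξlaw hNmeas hNlaw hNξ
  have hstep : ∀ (ρ : Measure ℝ) [IsProbabilityMeasure ρ], P.map Z = P.map U ∗ ρ →
      P.map (fun ω => I ω * max (Z ω - V ω) 0) = lindleyMap (P.map fun ω => U ω - V ω) p ρ :=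
    fun _ _ => map_mul_max_sub_eq_lindleyMap hUmeas hVmeas hImeas hZmeas ⟨hp.1.le, hp.2.le⟩
      hI1 hI0 hindep
  have hUL : P.map (fun ω => U ω + I ω * max (Z ω - V ω) 0)
      = P.map U ∗ P.map fun ω => I ω * max (Z ω - V ω) 0 :=
    (indepFun_mul_max_sub hUmeas hVmeas hImeas hZmeas hindep).map_add_eq_map_conv_map
      hUmeas hLmeas
  have hUW : P'.map (fun ω => U'' ω + W ω) = P.map U ∗ P'.map W := by
    rw [← hU''law]; exact hU''W.map_add_eq_map_conv_map hU''meas hWmeas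
  have hforward : P.map Z = P.map (fun ω => U ω + I ω * max (Z ω - V ω) 0) →
      P.map (fun ω => I ω * max (Z ω - V ω) 0) = P'.map W := fun hA =>
    eq_of_lindleyMap_eq_self _ _ ⟨hp.1, hp.2.le⟩ _ (hstep _ (hA.trans hUL)).symm hWfix
  refine ⟨⟨fun hA => ?_, fun hB => ?_⟩, fun hA => (hforward hA).symm⟩
  · rw [hA, hUL, hUW, hforward hA]
  · rw [hUL, hstep _ (hB.trans hUW), hWfix, hB, hUW]

theorem stmt_10 {Ω Ω' : Type*} [MeasurableSpace Ω] [MeasurableSpace Ω']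
    (P : Measure Ω) [IsProbabilityMeasure P] (P' : Measure Ω') [IsProbabilityMeasure P']
    (p : ℝ) (hp : p ∈ Set.Ioo (0 : ℝ) 1)
    (U V I Z : Ω → ℝ)
    (hUmeas : Measurable U) (hVmeas : Measurable V) (hImeas : Measurable I)
    (hZmeas : Measurable Z)
    (hU : ∀ ω', 0 ≤ U ω') (hV : ∀ ω', 0 ≤ V ω')
    (hI1 : P {ω' | I ω' = 1} = ENNReal.ofReal (1 - p))
    (hI0 : P {ω' | I ω' = 0} = ENNReal.ofReal p)
    (hindep : iIndepFun ![U, V, I, Z] P)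
    -- auxiliary space carrying the random walk with increments distributed as U - V,
    -- the geometric time N, and an independent copy U'' of U
    (ξ : ℕ → Ω' → ℝ) (hξmeas : ∀ i, Measurable (ξ i))
    (hξindep : iIndepFun ξ P')
    (hξlaw : ∀ i, Measure.map (ξ i) P' = Measure.map (fun ω' => U ω' - V ω') P)
    (N : Ω' → ℕ) (hNmeas : Measurable N)
    (hNlaw : ∀ n : ℕ, P' {ω' | N ω' = n} = ENNReal.ofReal (p * (1 - p) ^ n))
    (hNξ : IndepFun (fun ω' => (fun i => ξ i ω')) N P')
    (S : ℕ → Ω' → ℝ) (hS0 : ∀ ω', S 0 ω' = 0)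
    (hS : ∀ k ω', S (k + 1) ω' = S k ω' + ξ (k + 1) ω')
    (W : Ω' → ℝ)
    (hW : ∀ ω', W ω' =
      (Finset.range (N ω' + 1)).sup' Finset.nonempty_range_add_one (fun k => S k ω'))
    (U'' : Ω' → ℝ) (hU''meas : Measurable U'')
    (hU''law : Measure.map U'' P' = Measure.map U P)
    (hU''W : IndepFun U'' W P') :
    (Measure.map Z P =
        Measure.map (fun ω' => U ω' + I ω' * max (Z ω' - V ω') 0) P ↔
      Measure.map Z P = Measure.map (fun ω' => U'' ω' + W ω') P') ∧
    (Measure.map Z P =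
        Measure.map (fun ω' => U ω' + I ω' * max (Z ω' - V ω') 0) P →
      Measure.map W P' = Measure.map (fun ω' => I ω' * max (Z ω' - V ω') 0) P) :=
  stmt_10_general P P' p hp U V I Z hUmeas hVmeas hImeas hZmeas hI1 hI0 hindep ξ hξmeas hξindep
    hξlaw N hNmeas hNlaw hNξ S hS0 hS W hW U'' hU''meas hU''law hU''W
end

section
/- Let x_1, ..., x_n be real numbers and x'_1, ..., x'_n nonnegative reals, with partial sums s_0 = s'_0 = 0, s_k = Σ_{i≤k} x_i, s'_k = Σ_{i≤k} x'_i. Define (w_0, w'_0) = (0,0) and w_k = (w_{k-1} + x_k)^+, w'_k = (w'_{k-1} + x'_k)·1{w_{k-1} + x_k ≥ 0}. Let j_n := min{ j ∈ {0,...,n} : s_j = min_{0 ≤ i ≤ n} s_i } be the first index at which the minimum of the partial sums is attained. Then w_n = s_n - s_{j_n} and w'_n = s'_n - s'_{j_n}. -/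
theorem stmt_12 (n : ℕ) (x x' s s' w w' : ℕ → ℝ)
    (hx' : ∀ i, 0 ≤ x' i)
    (hs0 : s 0 = 0) (hs : ∀ k, s (k + 1) = s k + x (k + 1))
    (hs'0 : s' 0 = 0) (hs'rec : ∀ k, s' (k + 1) = s' k + x' (k + 1))
    (hw0 : w 0 = 0) (hw'0 : w' 0 = 0)
    (hw : ∀ k, w (k + 1) = max (w k + x (k + 1)) 0)
    (hw' : ∀ k, w' (k + 1) = if 0 ≤ w k + x (k + 1) then w' k + x' (k + 1) else 0)
    (j : ℕ) (hjle : j ≤ n)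
    (hjmin : ∀ i ≤ n, s j ≤ s i)
    (hjfirst : ∀ i < j, s j < s i) :
    w n = s n - s j ∧ w' n = s' n - s' j := by
  induction n generalizing j with
  | zero =>
    interval_cases j
    simp [hw0, hw'0]
  | succ n ih =>
    -- find the first argmin m over 0..n
    have hex : ∃ m, m ≤ n ∧ ∀ i ≤ n, s m ≤ s i := by
      obtain ⟨m, hm1, hm2⟩ := Finset.exists_min_image (Finset.range (n+1)) s
        ⟨0, Finset.mem_range.mpr (Nat.succ_pos n)⟩
      exact ⟨m, Nat.lt_succ_iff.mp (Finset.mem_range.mp hm1),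
        fun i hi => hm2 i (Finset.mem_range.mpr (Nat.lt_succ_iff.mpr hi))⟩
    set m := Nat.find hex with hmdef
    obtain ⟨hmle, hmmin⟩ := Nat.find_spec hex
    have hmfirst : ∀ i < m, s m < s i := by
      intro i hi
      have hnot := Nat.find_min hex hi
      push_neg at hnot
      obtain ⟨k, hk, hks⟩ := hnot (le_trans hi.le hmle)
      exact lt_of_le_of_lt (hmmin k hk) hks
    obtain ⟨hwn, hw'n⟩ := ih m hmle hmmin hmfirst
    by_cases h1 : s m ≤ s (n + 1)
    · -- j = m
      have hjm : j = m := by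
        by_contra hne
        rcases Nat.lt_or_ge j m with h | h
        · have h2 : s m ≤ s j := hmmin j (le_trans h.le hmle)
          have h3 : s j ≤ s m := hjmin m (le_trans hmle (Nat.le_succ n))
          exact absurd (hmfirst j h) (not_lt.mpr (by linarith))
        · have h' : m < j := lt_of_le_of_ne h (Ne.symm hne)
          have h2 : s m ≤ s j := by
            rcases Nat.lt_succ_iff_lt_or_eq.mp (Nat.lt_succ_of_le hjle) with hj' | hj'
            · exact hmmin j (Nat.lt_succ_iff.mp hj')
            · rw [hj']; exact h1
          exact absurd (hjfirst m h') (not_lt.mpr h2)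
      subst hjm
      have hwx : w n + x (n + 1) = s (n + 1) - s m := by rw [hwn, hs]; ring
      have hpos : 0 ≤ w n + x (n + 1) := by rw [hwx]; linarith
      constructor
      · rw [hw, hwx]; exact max_eq_left (by linarith)
      · rw [hw', if_pos hpos, hw'n, hs'rec]; ring
    · push_neg at h1
      have hjn : j = n + 1 := by
        by_contra hne
        have hjn' : j ≤ n := by omega
        have : s j ≤ s (n + 1) := hjmin (n + 1) le_rfl
        have : s m ≤ s j := hmmin j hjn'
        linarith
      subst hjn
      have hwx : w n + x (n + 1) = s (n + 1) - s m := by rw [hwn, hs]; ring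
      have hneg : ¬ 0 ≤ w n + x (n + 1) := by rw [hwx]; linarith
      constructor
      · rw [hw, max_eq_right (by linarith [not_le.mp hneg])]; ring
      · rw [hw', if_neg hneg]; ring
end
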